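/- arXiv:1907.03188 — 3 statements merged into one kernel-verified Lean document; each statement's English description precedes it below -/
import Mathlib

section
/- For all non-negative integers m and k, the sum over n from 0 to m of C(m,n) * C(m+n+k, m) / C(2m+n+k, n+m) * (m+2n+k+1)/(2m+n+k+1) equals 1. -/
/-!
Wilf–Zeilberger method. Let `F m n` be the summand and
`G m n = -C(m+1,n) ρ(m,n) n (n+k) (3m+n+2k+3) / ((m+1)(2m+n+k+1)(2m+n+k+2))`, where
`ρ(m,n) = C(m+n+k,m) / C(2m+n+k,n+m)`. Then `F (m+1) n - F m n = G m (n+1) - G m n`; summing over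
`n` telescopes to zero because `G m 0 = G m (m+2) = 0`, so the sum does not depend on `m`, and for
`m = 0` it is `1`. The recurrence itself is a rational identity once every term is written as
`C(m+1,n) ρ(m,n)` times a rational function, using the shift relations of `C` and `ρ`.
-/

open Finset Nat

theorem sum_range_eq_of_wz {M : Type*} [AddCommGroup M] {F G : ℕ → ℕ → M}
    (hwz : ∀ m n, n ≤ m + 1 → F (m + 1) n - F m n = G m (n + 1) - G m n)
    (hF : ∀ m, F m (m + 1) = 0) (hG_zero : ∀ m, G m 0 = 0) (hG : ∀ m, G m (m + 2) = 0)
    (m : ℕ) : ∑ n ∈ range (m + 1), F m n = F 0 0 := by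
  induction m with
  | zero => simp
  | succ m ih =>
    have hstep : ∑ n ∈ range (m + 2), (F (m + 1) n - F m n) = 0 := by
      rw [sum_congr rfl fun n hn => hwz m n (by simp at hn; omega),
        sum_range_sub (G m), hG, hG_zero, sub_zero]
    rw [← ih, ← sub_eq_zero, ← hstep, sum_sub_distrib, sum_range_succ (F m) (m + 1), hF,
      add_zero]

section Choose

variable {K : Type*} [Field K] [CharZero K]

theorem cast_choose_eq_succ_choose_mul_div {N n : ℕ} (h : n ≤ N + 1) :
    (N.choose n : K) = ((N + 1).choose n : K) * ((N : K) + 1 - n) / ((N : K) + 1) := by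
  rw [eq_div_iff (Nat.cast_add_one_ne_zero _)]
  have := congrArg (Nat.cast (R := K)) (choose_mul_succ_eq N n)
  push_cast [Nat.cast_sub h] at this
  exact this

theorem cast_choose_succ_right_eq_mul_div {N n : ℕ} (h : n ≤ N) :
    (N.choose (n + 1) : K) = (N.choose n : K) * ((N : K) - n) / ((n : K) + 1) := by
  rw [eq_div_iff (Nat.cast_add_one_ne_zero _)]
  have := congrArg (Nat.cast (R := K)) (choose_succ_right_eq N n)
  push_cast [Nat.cast_sub h] at this
  exact this

end Choose

def binomRatio (m k n : ℕ) : ℚ :=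
  ((m + n + k).choose m : ℚ) / ((2 * m + n + k).choose (n + m) : ℚ)

theorem binomRatio_eq_factorial (m k n : ℕ) :
    binomRatio m k n =
      (m + n + k)! * (m + n)! * (m + k)! / (m ! * (n + k)! * (2 * m + n + k)! : ℚ) := by
  rw [binomRatio, cast_choose ℚ (by omega : m ≤ m + n + k),
    cast_choose ℚ (by omega : n + m ≤ 2 * m + n + k),
    show m + n + k - m = n + k by omega, show 2 * m + n + k - (n + m) = m + k by omega,
    add_comm n m]
  field_simp

theorem binomRatio_succ_left (m k n : ℕ) :
    binomRatio (m + 1) k n = binomRatio m k n *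
      ((m + n + 1) * (m + k + 1) * (m + n + k + 1)) /
        ((m + 1) * (2 * m + n + k + 1) * (2 * m + n + k + 2)) := by
  rw [binomRatio_eq_factorial, binomRatio_eq_factorial,
    show m + 1 + n + k = (m + n + k) + 1 by omega, show m + 1 + n = (m + n) + 1 by omega,
    show m + 1 + k = (m + k) + 1 by omega,
    show 2 * (m + 1) + n + k = (2 * m + n + k) + 1 + 1 by omega]
  simp only [factorial_succ]
  push_cast
  field_simp
  ring

theorem binomRatio_succ_right (m k n : ℕ) :
    binomRatio m k (n + 1) = binomRatio m k n *
      ((m + n + 1) * (m + n + k + 1)) / ((n + k + 1) * (2 * m + n + k + 1)) := by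
  rw [binomRatio_eq_factorial, binomRatio_eq_factorial,
    show m + (n + 1) + k = (m + n + k) + 1 by omega, show m + (n + 1) = (m + n) + 1 by omega,
    show n + 1 + k = (n + k) + 1 by omega,
    show 2 * m + (n + 1) + k = (2 * m + n + k) + 1 by omega]
  simp only [factorial_succ]
  push_cast
  field_simp

def wzTerm (m k n : ℕ) : ℚ :=
  (m.choose n : ℚ) * ((m + n + k).choose m : ℚ) / ((2 * m + n + k).choose (n + m) : ℚ)
    * ((m : ℚ) + 2 * n + k + 1) / (2 * (m : ℚ) + n + k + 1)

def wzCert (m k n : ℕ) : ℚ :=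
  -((m + 1).choose n : ℚ) * binomRatio m k n * (n * (n + k) * (3 * m + n + 2 * k + 3)) /
    ((m + 1) * (2 * m + n + k + 1) * (2 * m + n + k + 2))

theorem wzTerm_eq (m k n : ℕ) :
    wzTerm m k n = (m.choose n : ℚ) * binomRatio m k n * ((m : ℚ) + 2 * n + k + 1) /
      (2 * (m : ℚ) + n + k + 1) := by
  rw [wzTerm, binomRatio]
  ring

theorem wzTerm_succ_sub {m n : ℕ} (k : ℕ) (hn : n ≤ m + 1) :
    wzTerm (m + 1) k n - wzTerm m k n = wzCert m k (n + 1) - wzCert m k n := by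
  rw [wzTerm_eq, wzTerm_eq, wzCert, wzCert, binomRatio_succ_left, binomRatio_succ_right,
    cast_choose_eq_succ_choose_mul_div hn, cast_choose_succ_right_eq_mul_div hn]
  push_cast
  field_simp
  ring

theorem binomial_identity (m k : ℕ) :
    ∑ n ∈ Finset.range (m + 1),
      (m.choose n : ℚ) * ((m + n + k).choose m : ℚ) / ((2 * m + n + k).choose (n + m) : ℚ)
        * ((m : ℚ) + 2 * n + k + 1) / (2 * (m : ℚ) + n + k + 1) = 1 := by
  change ∑ n ∈ range (m + 1), wzTerm m k n = 1
  rw [sum_range_eq_of_wz (F := fun m n => wzTerm m k n) (G := fun m n => wzCert m k n)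
    (fun m n hn => wzTerm_succ_sub k hn)]
  · have hk : (k : ℚ) + 1 ≠ 0 := by positivity
    simp [wzTerm, hk]
  all_goals intro m; simp [wzTerm, wzCert]
end

section
/- For non-negative integers m, k with k ≥ m, the sum over n from 0 to m of C(m,n) * C(n+k, m) / C(m+n+k, n+m) * (2n+k+1)/(n+m+k+1) equals 1. -/
/-!
The summand `F(m, n) = binomTerm m k n` has a Wilf–Zeilberger partner `G(m, n) = binomCert m k n`
(a hypergeometric certificate of the kind produced by Zeilberger's algorithm): for `n ≤ m ≤ k`,
`F(m + 1, n) - F(m, n) = G(m, n + 1) - G(m, n)`, while `G(m, 0) = 0` and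
`F(m + 1, m + 1) = -G(m, m + 1)`. Summing over `n` telescopes, so `∑ₙ F(m, n)` does not depend on
`m` as long as `m ≤ k`, and at `m = 0` it is `1`. Each of these identities becomes an identity of
rational functions once every binomial coefficient is written as a rational multiple of a neighbour.
-/

open Finset

section ChooseRatios

variable {K : Type*} [Field K] [CharZero K]

theorem Nat.cast_choose_succ_left {N j : ℕ} (h : j ≤ N) :
    ((N + 1).choose j : K) = (N + 1) / (N + 1 - j) * N.choose j := by
  have hsub : ((N + 1 - j : ℕ) : K) = N + 1 - j := by
    push_cast [Nat.cast_sub (by omega : j ≤ N + 1)]; ring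
  have hne : (N : K) + 1 - j ≠ 0 := by rw [← hsub]; exact_mod_cast (by omega : N + 1 - j ≠ 0)
  have := congrArg (Nat.cast : ℕ → K) (Nat.choose_mul_succ_eq N j)
  push_cast [hsub] at this
  field_simp
  linear_combination -this

theorem Nat.cast_choose_succ_right {N j : ℕ} (h : j ≤ N) :
    (N.choose (j + 1) : K) = (N - j) / (j + 1) * N.choose j := by
  have := congrArg (Nat.cast : ℕ → K) (Nat.choose_succ_right_eq N j)
  push_cast [Nat.cast_sub h] at this
  field_simp
  linear_combination this

theorem Nat.cast_choose_succ_succ (N j : ℕ) :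
    ((N + 1).choose (j + 1) : K) = (N + 1) / (j + 1) * N.choose j := by
  have := congrArg (Nat.cast : ℕ → K) (Nat.add_one_mul_choose_eq N j)
  push_cast at this
  field_simp
  linear_combination -this

end ChooseRatios

def binomTerm (m k n : ℕ) : ℚ :=
  (m.choose n : ℚ) * ((n + k).choose m : ℚ) / ((m + n + k).choose (n + m) : ℚ)
    * (2 * (n : ℚ) + k + 1) / ((n : ℚ) + m + k + 1)

def binomCert (m k n : ℕ) : ℚ :=
  -2 * n * ((n : ℚ) + k - m) * ((m + 1).choose n : ℚ) * ((n + k).choose m : ℚ)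
    / (((m : ℚ) + 1) * ((n : ℚ) + m + k + 1) * ((m + n + k).choose (n + m) : ℚ))

theorem binomTerm_succ_sub {m k n : ℕ} (hn : n ≤ m) (hm : m ≤ k) :
    binomTerm (m + 1) k n - binomTerm m k n = binomCert m k (n + 1) - binomCert m k n := by
  have hC1 : ((m + 1).choose n : ℚ) = (m + 1) / (m + 1 - n) * m.choose n :=
    Nat.cast_choose_succ_left hn
  have hC2 : ((n + k).choose (m + 1) : ℚ) = (n + k - m) / (m + 1) * (n + k).choose m := by
    rw [Nat.cast_choose_succ_right (by omega)]; push_cast; ring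
  have hC3 : ((m + 1 + n + k).choose (n + (m + 1)) : ℚ)
      = (m + n + k + 1) / (n + m + 1) * (m + n + k).choose (n + m) := by
    rw [show m + 1 + n + k = m + n + k + 1 by ring, show n + (m + 1) = n + m + 1 by ring,
      Nat.cast_choose_succ_succ]; push_cast; ring
  have hC4 : ((m + 1).choose (n + 1) : ℚ) = (m + 1) / (n + 1) * m.choose n := by
    rw [Nat.cast_choose_succ_succ]
  have hC5 : ((n + 1 + k).choose m : ℚ) = (n + k + 1) / (n + k + 1 - m) * (n + k).choose m := by
    rw [show n + 1 + k = n + k + 1 by ring, Nat.cast_choose_succ_left (by omega)]; push_cast; ring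
  have hC6 : ((m + (n + 1) + k).choose (n + 1 + m) : ℚ)
      = (m + n + k + 1) / (n + m + 1) * (m + n + k).choose (n + m) := by
    rw [show m + (n + 1) + k = m + n + k + 1 by ring, show n + 1 + m = n + m + 1 by ring,
      Nat.cast_choose_succ_succ]; push_cast; ring
  have h1 : (m : ℚ) + 1 - n ≠ 0 := by
    have : (n : ℚ) ≤ m := by exact_mod_cast hn
    linarith
  have h2 : (n : ℚ) + k + 1 - m ≠ 0 := by
    have : (m : ℚ) ≤ k := by exact_mod_cast hm
    linarith
  have h3 : ((m + n + k).choose (n + m) : ℚ) ≠ 0 := by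
    exact_mod_cast (Nat.choose_pos (by omega)).ne'
  simp only [binomTerm, binomCert, hC1, hC2, hC3, hC4, hC5, hC6]
  push_cast
  field_simp
  ring

theorem binomTerm_succ_self_add_binomCert (m k : ℕ) :
    binomTerm (m + 1) k (m + 1) + binomCert m k (m + 1) = 0 := by
  have hC1 : ((m + 1 + k).choose (m + 1) : ℚ) = (k + 1) / (m + 1) * (m + 1 + k).choose m := by
    rw [Nat.cast_choose_succ_right (by omega)]; push_cast; ring
  have hC2 : ((m + 1 + (m + 1) + k).choose (m + 1 + (m + 1)) : ℚ)
      = (2 * m + k + 2) / (2 * m + 2) * (m + (m + 1) + k).choose (m + 1 + m) := by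
    rw [show m + 1 + (m + 1) + k = m + (m + 1) + k + 1 by ring,
      show m + 1 + (m + 1) = m + 1 + m + 1 by ring, Nat.cast_choose_succ_succ]
    push_cast; ring
  have h : ((m + (m + 1) + k).choose (m + 1 + m) : ℚ) ≠ 0 := by
    exact_mod_cast (Nat.choose_pos (by omega)).ne'
  simp only [binomTerm, binomCert, hC1, hC2, Nat.choose_self]
  push_cast
  field_simp
  ring

theorem Finset.sum_range_succ_eq_of_wz {M : Type*} [AddCommGroup M] {f g G : ℕ → M} {m : ℕ}
    (hstep : ∀ n ≤ m, g n - f n = G (n + 1) - G n) (hG : G 0 = 0)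
    (htop : g (m + 1) + G (m + 1) = 0) :
    ∑ n ∈ range (m + 2), g n = ∑ n ∈ range (m + 1), f n := by
  have hsum : ∑ n ∈ range (m + 1), (g n - f n) = G (m + 1) := by
    rw [sum_congr rfl fun n hn => hstep n (Nat.lt_succ_iff.mp (mem_range.mp hn)),
      sum_range_sub, hG, sub_zero]
  calc ∑ n ∈ range (m + 2), g n
      = ∑ n ∈ range (m + 1), (g n - f n) + ∑ n ∈ range (m + 1), f n + g (m + 1) := by
        rw [sum_range_succ, sum_sub_distrib, sub_add_cancel]
    _ = ∑ n ∈ range (m + 1), f n + (g (m + 1) + G (m + 1)) := by rw [hsum]; abel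
    _ = ∑ n ∈ range (m + 1), f n := by rw [htop, add_zero]

theorem sum_binomTerm_eq_one {m k : ℕ} (hk : m ≤ k) :
    ∑ n ∈ range (m + 1), binomTerm m k n = 1 := by
  induction m with
  | zero => simp [binomTerm, Nat.cast_add_one_ne_zero]
  | succ m ih =>
    rw [Finset.sum_range_succ_eq_of_wz (fun n hn => binomTerm_succ_sub hn (by omega))
      (by simp [binomCert]) (binomTerm_succ_self_add_binomCert m k), ih (by omega)]

theorem binomial_identity_shifted (m k : ℕ) (hk : m ≤ k) :
    ∑ n ∈ Finset.range (m + 1),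
      (m.choose n : ℚ) * ((n + k).choose m : ℚ) / ((m + n + k).choose (n + m) : ℚ)
        * (2 * (n : ℚ) + k + 1) / ((n : ℚ) + m + k + 1) = 1 :=
  sum_binomTerm_eq_one hk
end

section
/- For every integer k ≥ 2, 1/π = (1/2)_k · Σ_{n=0}^∞ (−1)^n · [(1/2)_n / n!]^3 · (n+1/2)_k · (k+2n+1/2) / [(n+1)_k]^2. -/
/-! With `c n = (1/2)_n / n! = binom(2n, n) / 4^n`, the `n`-th summand times `(1/2)_k` is
`F(n, k) = (-1)^n c_n² c_{n+k} c_k (k + 2n + 1/2) / binom(n + k, n)`. Together with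
`G(n, k) = (-1)^n c_n² c_{n+k} c_k n / binom(n + k, n)` it forms a Wilf–Zeilberger pair,
`F(n, k+1) - F(n, k) = G(n+1, k) - G(n, k)`, so summing over `n` telescopes and `∑ₙ F(n, k)`
does not depend on `k ≥ 2`. As `|F(n, k)| ≤ 1 / binom(n + k, n)`, dominated convergence for
`k → ∞` keeps only the term `n = 0`, which is `c_k² (k + 1/2) → 1/π` by Wallis' product. -/

/-- Rising factorial (Pochhammer symbol) `(x)_n`. -/
def risingFac (x : ℝ) (n : ℕ) : ℝ := ∏ i ∈ Finset.range n, (x + i)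

open Filter Topology Finset Nat

theorem tsum_sub_eq_of_tendsto {G : Type*} [AddCommGroup G] [TopologicalSpace G]
    [IsTopologicalAddGroup G] [T2Space G] {g : ℕ → G} {l : G}
    (hs : Summable fun n => g (n + 1) - g n) (hg : Tendsto g atTop (𝓝 l)) :
    ∑' n, (g (n + 1) - g n) = l - g 0 := by
  refine tendsto_nhds_unique hs.hasSum.tendsto_sum_nat ?_
  simp_rw [sum_range_sub]
  exact hg.sub_const _

lemma risingFac_zero (x : ℝ) : risingFac x 0 = 1 := prod_range_zero _

lemma risingFac_succ (x : ℝ) (n : ℕ) : risingFac x (n + 1) = risingFac x n * (x + n) :=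
  prod_range_succ _ _

lemma risingFac_add (x : ℝ) (m n : ℕ) :
    risingFac x (m + n) = risingFac x m * risingFac (x + m) n := by
  simp only [risingFac, prod_range_add, cast_add, add_assoc]

lemma risingFac_pos {x : ℝ} (hx : 0 < x) (n : ℕ) : 0 < risingFac x n :=
  prod_pos fun _ _ => by positivity

lemma risingFac_one (n : ℕ) : risingFac 1 n = n ! := by
  induction n with
  | zero => simp [risingFac_zero]
  | succ n ih => rw [risingFac_succ, ih, factorial_succ]; push_cast; ring

noncomputable def centralCoeff (n : ℕ) : ℝ := risingFac (1 / 2) n / n !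

local notation "c" => centralCoeff

lemma centralCoeff_zero : c 0 = 1 := by simp [centralCoeff, risingFac_zero]

lemma centralCoeff_succ (n : ℕ) : c (n + 1) = c n * ((2 * n + 1) / (2 * n + 2)) := by
  simp only [centralCoeff, risingFac_succ, factorial_succ]
  push_cast
  field_simp
  ring

lemma centralCoeff_pos (n : ℕ) : 0 < c n :=
  div_pos (risingFac_pos one_half_pos n) (by positivity)

lemma centralCoeff_antitone : Antitone c := by
  refine antitone_nat_of_succ_le fun n => ?_
  rw [centralCoeff_succ]
  exact mul_le_of_le_one_right (centralCoeff_pos n).le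
    ((div_le_one (by positivity)).mpr (by linarith))

lemma centralCoeff_le_one (n : ℕ) : c n ≤ 1 :=
  centralCoeff_zero ▸ centralCoeff_antitone n.zero_le

lemma centralCoeff_sq_mul_le_one (n : ℕ) : c n ^ 2 * (2 * n + 1) ≤ 1 := by
  induction n with
  | zero => simp [centralCoeff_zero]
  | succ n ih =>
    have key : c (n + 1) ^ 2 * (2 * ↑(n + 1) + 1)
        = c n ^ 2 * (2 * n + 1) * ((2 * n + 1) * (2 * n + 3) / (2 * n + 2) ^ 2) := by
      rw [centralCoeff_succ]; push_cast; field_simp; ring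
    rw [key]
    refine mul_le_one₀ ih (by positivity) ((div_le_one (by positivity)).mpr (by nlinarith))

lemma wallis_mul_centralCoeff_sq (k : ℕ) : Real.Wallis.W k * (c k ^ 2 * (2 * k + 1)) = 1 := by
  induction k with
  | zero => simp [Real.Wallis.W, centralCoeff_zero]
  | succ k ih =>
    refine Eq.trans ?_ ih
    rw [Real.Wallis.W_succ, centralCoeff_succ]
    push_cast
    field_simp
    ring

lemma tendsto_centralCoeff_sq_mul :
    Tendsto (fun k : ℕ => c k ^ 2 * (k + 1 / 2)) atTop (𝓝 (1 / Real.pi)) := by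
  have h : ∀ k : ℕ, (2 * Real.Wallis.W k)⁻¹ = c k ^ 2 * (k + 1 / 2) := fun k => by
    have := wallis_mul_centralCoeff_sq k
    have := Real.Wallis.W_pos k
    field_simp
    linarith
  refine Tendsto.congr h ?_
  convert (Real.Wallis.tendsto_W_nhds_pi_div_two.const_mul 2).inv₀ (by positivity) using 2
  ring

noncomputable def wzKernel (n k : ℕ) : ℝ :=
  (-1) ^ n * c n ^ 2 * c (n + k) * c k / (n + k).choose n

noncomputable def wzF (n k : ℕ) : ℝ := wzKernel n k * (k + 2 * n + 1 / 2)

noncomputable def wzG (n k : ℕ) : ℝ := wzKernel n k * n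

lemma wzF_zero (k : ℕ) : wzF 0 k = c k ^ 2 * (k + 1 / 2) := by
  simp only [wzF, wzKernel, centralCoeff_zero, zero_add, choose_zero_right]
  push_cast
  ring

lemma wzF_succ_sub (n k : ℕ) : wzF n (k + 1) - wzF n k = wzG (n + 1) k - wzG n k := by
  have e₁ : n + (k + 1) = n + k + 1 := by omega
  have e₂ : n + 1 + k = n + k + 1 := by omega
  simp only [wzF, wzG, wzKernel, cast_add_choose]
  simp only [e₁, e₂, centralCoeff_succ, factorial_succ]
  push_cast
  field_simp
  ring

lemma wzF_eq (n k : ℕ) :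
    wzF n k = risingFac (1 / 2) k * ((-1) ^ n * (risingFac (1 / 2) n / n !) ^ 3
      * risingFac (n + 1 / 2) k * (k + 2 * n + 1 / 2) / risingFac (n + 1) k ^ 2) := by
  have half : risingFac (1 / 2) (n + k) = risingFac (1 / 2) n * risingFac (n + 1 / 2) k := by
    rw [risingFac_add, add_comm (1 / 2 : ℝ)]
  have one : ((n + k) ! : ℝ) = n ! * risingFac (n + 1) k := by
    rw [← risingFac_one, risingFac_add, risingFac_one, add_comm (1 : ℝ)]
  have h₁ := (risingFac_pos one_half_pos n).ne'
  have h₂ := (risingFac_pos (by positivity : (0 : ℝ) < n + 1) k).ne'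
  simp only [wzF, wzKernel, centralCoeff, cast_add_choose, half, one]
  field_simp

lemma centralCoeff_sq_mul_mul_le_one (n k : ℕ) :
    c n ^ 2 * c (n + k) * c k * (k + 2 * n + 1 / 2) ≤ 1 := by
  have hn := centralCoeff_sq_mul_le_one n
  have hk := centralCoeff_sq_mul_le_one k
  have hk₁ := centralCoeff_le_one k
  have hk₀ := centralCoeff_pos k
  calc c n ^ 2 * c (n + k) * c k * (k + 2 * n + 1 / 2)
      ≤ c n ^ 2 * c k * c k * (k + 2 * n + 1 / 2) := by
        gcongr
        exact centralCoeff_antitone (Nat.le_add_left k n)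
    _ = c n ^ 2 * (c k ^ 2 * (2 * k + 1) + 4 * n * c k ^ 2) / 2 := by ring
    _ ≤ c n ^ 2 * (1 + 4 * n * 1) / 2 := by gcongr; nlinarith
    _ ≤ c n ^ 2 * (2 * n + 1) := by nlinarith
    _ ≤ 1 := hn

lemma abs_wzF_le (n k : ℕ) : |wzF n k| ≤ ((n + k).choose n : ℝ)⁻¹ := by
  have hC : (0 : ℝ) < (n + k).choose n := by exact_mod_cast choose_pos (Nat.le_add_right n k)
  have h : wzF n k =
      (-1) ^ n * (c n ^ 2 * c (n + k) * c k * (k + 2 * n + 1 / 2)) / (n + k).choose n := by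
    rw [wzF, wzKernel]; ring
  have := centralCoeff_pos n
  have := centralCoeff_pos k
  have := centralCoeff_pos (n + k)
  rw [h, abs_div, abs_mul, abs_pow, abs_neg, abs_one, one_pow, one_mul, abs_of_pos hC,
    abs_of_nonneg (by positivity), ← one_div]
  exact div_le_div_of_nonneg_right (centralCoeff_sq_mul_mul_le_one n k) hC.le

lemma abs_wzG_le_abs_wzF (n k : ℕ) : |wzG n k| ≤ |wzF n k| := by
  rw [wzG, wzF, abs_mul, abs_mul]
  gcongr
  linarith [(k.cast_nonneg : (0 : ℝ) ≤ k)]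

lemma inv_choose_add_le {n k : ℕ} (hk : 2 ≤ k) :
    ((n + k).choose n : ℝ)⁻¹ ≤ ((n + 2).choose 2 : ℝ)⁻¹ := by
  rw [← choose_symm_add]
  gcongr
  exact_mod_cast choose_pos (Nat.le_add_right n 2)

lemma summable_inv_choose_two : Summable fun n : ℕ => ((n + 2).choose 2 : ℝ)⁻¹ := by
  have h := ((Real.summable_nat_pow_inv (p := 2)).mpr one_lt_two).comp_injective
    (add_left_injective 1)
  refine .of_nonneg_of_le (fun n => by positivity) (fun n => ?_) (h.mul_left 2)
  rw [cast_choose_two, Function.comp_apply, inv_div, ← div_eq_mul_inv]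
  push_cast
  gcongr
  nlinarith

lemma tendsto_inv_choose_add {n : ℕ} (hn : 1 ≤ n) :
    Tendsto (fun k : ℕ => ((n + k).choose n : ℝ)⁻¹) atTop (𝓝 0) := by
  have h : ∀ k, k + 1 ≤ (n + k).choose n := fun k => by
    rw [choose_symm_add, ← choose_succ_self_right]
    exact choose_le_choose k (by omega)
  exact tendsto_inv_atTop_zero.comp <| tendsto_natCast_atTop_atTop.comp <|
    tendsto_atTop_mono h (tendsto_add_atTop_nat 1)

section

variable {k : ℕ} (hk : 2 ≤ k)
include hk

lemma summable_wzF : Summable fun n => wzF n k :=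
  summable_inv_choose_two.of_norm_bounded fun n => (abs_wzF_le n k).trans (inv_choose_add_le hk)

lemma tsum_wzF_succ : ∑' n, wzF n (k + 1) = ∑' n, wzF n k := by
  have hs := summable_wzF hk
  have hs' := summable_wzF (k := k + 1) (by omega)
  have hG : Tendsto (fun n => wzG n k) atTop (𝓝 0) :=
    squeeze_zero_norm (fun n => abs_wzG_le_abs_wzF n k) (by simpa using hs.tendsto_atTop_zero.norm)
  have htel := tsum_sub_eq_of_tendsto (g := fun n => wzG n k)
    (by simpa only [wzF_succ_sub] using hs'.sub hs) hG
  rw [← sub_eq_zero, ← hs'.tsum_sub hs]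
  simpa [wzF_succ_sub, wzG] using htel

end

lemma tendsto_tsum_wzF : Tendsto (fun k => ∑' n, wzF n k) atTop (𝓝 (1 / Real.pi)) := by
  have hlim : ∀ n, Tendsto (fun k => wzF n k) atTop
      (𝓝 (Pi.single (M := fun _ => ℝ) 0 (1 / Real.pi) n)) := by
    rintro (_ | n)
    · simpa only [wzF_zero, Pi.single_eq_same] using tendsto_centralCoeff_sq_mul
    · rw [Pi.single_eq_of_ne n.succ_ne_zero]
      exact squeeze_zero_norm (fun k => abs_wzF_le (n + 1) k) (tendsto_inv_choose_add (by omega))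
  have hbound : ∀ᶠ k in atTop, ∀ n, ‖wzF n k‖ ≤ ((n + 2).choose 2 : ℝ)⁻¹ :=
    eventually_atTop.2 ⟨2, fun k hk n => (abs_wzF_le n k).trans (inv_choose_add_le hk)⟩
  simpa only [tsum_pi_single] using
    tendsto_tsum_of_dominated_convergence summable_inv_choose_two hlim hbound

lemma hasSum_wzF {k : ℕ} (hk : 2 ≤ k) : HasSum (fun n => wzF n k) (1 / Real.pi) := by
  have hconst : ∀ j ≥ k, ∑' n, wzF n j = ∑' n, wzF n k :=
    Nat.le_induction rfl fun j hj ih => (tsum_wzF_succ (hk.trans hj)).trans ih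
  have h := tendsto_nhds_unique
    (tendsto_const_nhds.congr' (eventually_atTop.2 ⟨k, fun j hj => (hconst j hj).symm⟩))
    tendsto_tsum_wzF
  exact h ▸ (summable_wzF hk).hasSum

theorem one_div_pi_subfamily (k : ℕ) (hk : 2 ≤ k) :
    ∃ S : ℝ, Filter.Tendsto
      (fun N : ℕ => ∑ n ∈ Finset.range N,
        (-1 : ℝ) ^ n * (risingFac (1 / 2) n / (n.factorial : ℝ)) ^ 3
          * risingFac ((n : ℝ) + 1 / 2) k * ((k : ℝ) + 2 * n + 1 / 2)
          / (risingFac ((n : ℝ) + 1) k) ^ 2)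
      Filter.atTop (nhds S) ∧
    1 / Real.pi = risingFac (1 / 2) k * S := by
  have hr := (risingFac_pos one_half_pos k).ne'
  refine ⟨1 / Real.pi / risingFac (1 / 2) k, ?_, by field_simp⟩
  have h := (hasSum_wzF hk).div_const (risingFac (1 / 2) k)
  simp only [wzF_eq, mul_div_cancel_left₀ _ hr] at h
  exact h.tendsto_sum_nat
end
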